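/- arXiv:1608.02334 — 4 statements merged into one kernel-verified Lean document; each statement's English description precedes it below -/
import Mathlib

section
/- Let K be a compact convex subset of a locally convex topological vector space, and let μ, ν be finite positive regular Borel measures on K. Suppose there exists a unital positive linear map Φ : C(K) → L∞(μ) such that Φ(a) = a (as an element of L∞(μ)) for every continuous affine function a on K, and ∫ f dν = ∫ Φ(f) dμ for every f ∈ C(K). Then ∫ f dμ ≤ ∫ f dν for every continuous convex function f on K. -/
open MeasureTheory

noncomputable section

/-- The subspace of functions `E → ℝ` that are continuous on `K`, playing the role of `C(K)`. -/
def contOnSubmodule {E : Type*} [AddCommGroup E] [Module ℝ E] [TopologicalSpace E]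
    (K : Set E) : Submodule ℝ (E → ℝ) where
  carrier := {f | ContinuousOn f K}
  add_mem' hf hg := hf.add hg
  zero_mem' := continuousOn_const
  smul_mem' c f hf := hf.const_smul c

/-!
A continuous convex function `f` on `K` is, up to `ε`, the maximum `g` of finitely many continuous
affine minorants (Hahn–Banach applied to the epigraph, then compactness of `K`). Every affine
minorant `a` of `g` satisfies `a = Φ a ≤ Φ g` by positivity, hence `g ≤ Φ g` a.e., and
`∫ f dμ - ε μ(K) ≤ ∫ g dμ ≤ ∫ Φ g dμ = ∫ g dν ≤ ∫ f dν`.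
-/

open Set Filter Finset

section Approximation

variable {E : Type*} [AddCommGroup E] [Module ℝ E] [TopologicalSpace E]

def IsFiniteMaxAffineOn (K : Set E) (g : E → ℝ) : Prop :=
  ∃ t : Finset (StrongDual ℝ E × ℝ),
    (∀ p ∈ t, ∀ x ∈ K, p.1 x + p.2 ≤ g x) ∧ ∀ x ∈ K, ∃ p ∈ t, g x ≤ p.1 x + p.2

variable [IsTopologicalAddGroup E] [ContinuousSMul ℝ E] [LocallyConvexSpace ℝ E] [T2Space E]

theorem ConvexOn.exists_isFiniteMaxAffineOn_approx {K : Set E} {f : E → ℝ} (hK : IsCompact K)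
    (hfc : ContinuousOn f K) (hf : ConvexOn ℝ K f) {ε : ℝ} (hε : 0 < ε) :
    ∃ g : E → ℝ, Continuous g ∧ IsFiniteMaxAffineOn K g ∧ ∀ x ∈ K, f x - ε ≤ g x ∧ g x ≤ f x := by
  classical
  rcases K.eq_empty_or_nonempty with rfl | hne
  · exact ⟨0, continuous_const, ⟨∅, by simp⟩, by simp⟩
  have hminor : ∀ x ∈ K, ∃ p : StrongDual ℝ E × ℝ,
      (∀ y ∈ K, p.1 y + p.2 ≤ f y) ∧ p.1 x + p.2 = f x - ε / 2 := by
    intro x hx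
    obtain ⟨l, c, hle, hlx⟩ := hf.exists_affine_le_of_lt (𝕜 := ℝ) hx
      (by linarith : f x - ε / 2 < f x) hK.isClosed hfc.lowerSemicontinuousOn
    exact ⟨(l, c), fun y hy => by simpa using hle ⟨y, hy⟩, by simpa using hlx⟩
  choose! p hp_le hp_eq using hminor
  obtain ⟨s, hsK, hcover⟩ := hK.elim_nhdsWithin_subcover
    (fun x => {y | f y - ε < (p x).1 y + (p x).2}) fun x hx => by
      refine ((hfc x hx).sub continuousWithinAt_const).eventually_lt
        ((p x).1.continuous.add continuous_const).continuousWithinAt ?_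
      show f x - ε < (p x).1 x + (p x).2
      rw [hp_eq x hx]
      linarith
  obtain ⟨x₀, hx₀⟩ := hne
  have ht : (s.image p).Nonempty := by
    obtain ⟨x, hx, -⟩ := mem_iUnion₂.1 (hcover hx₀)
    exact ⟨p x, mem_image_of_mem p hx⟩
  refine ⟨fun y => (s.image p).sup' ht fun q => q.1 y + q.2,
    Continuous.finset_sup'_apply ht fun q _ => q.1.continuous.add continuous_const,
    ⟨s.image p, fun q hq y _ => le_sup' (fun q => q.1 y + q.2) hq,
      fun y _ => (exists_mem_eq_sup' ht _).imp fun _ hq => ⟨hq.1, hq.2.le⟩⟩,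
    fun y hy => ⟨?_, sup'_le _ _ fun q hq => ?_⟩⟩
  · obtain ⟨x, hx, hyx⟩ := mem_iUnion₂.1 (hcover hy)
    exact hyx.le.trans (le_sup' (fun q => q.1 y + q.2) (mem_image_of_mem p hx))
  · obtain ⟨x, hx, rfl⟩ := mem_image.1 hq
    exact hp_le x (hsK x hx) y hy

end Approximation

section PositiveMap

variable {E : Type*} [AddCommGroup E] [Module ℝ E] [TopologicalSpace E] [MeasurableSpace E]
  {K : Set E} {μ : Measure E} {q : ENNReal}

def PreservesNonnegOn (Φ : contOnSubmodule K →ₗ[ℝ] Lp ℝ q μ) : Prop :=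
  ∀ f : contOnSubmodule K, (∀ x ∈ K, 0 ≤ (f : E → ℝ) x) → (fun _ => (0 : ℝ)) ≤ᵐ[μ] ⇑(Φ f)

def FixesAffineOn (Φ : contOnSubmodule K →ₗ[ℝ] Lp ℝ q μ) : Prop :=
  ∀ a : contOnSubmodule K, ConvexOn ℝ K (a : E → ℝ) → ConcaveOn ℝ K (a : E → ℝ) →
    ⇑(Φ a) =ᵐ[μ] (a : E → ℝ)

variable {Φ : contOnSubmodule K →ₗ[ℝ] Lp ℝ q μ}

theorem ae_le_apply_of_le_on (hpos : PreservesNonnegOn Φ) {f g : contOnSubmodule K}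
    (hfg : ∀ x ∈ K, (f : E → ℝ) x ≤ (g : E → ℝ) x) : ⇑(Φ f) ≤ᵐ[μ] ⇑(Φ g) := by
  have h := hpos (g - f) fun x hx => sub_nonneg.2 (hfg x hx)
  rw [map_sub] at h
  filter_upwards [h, Lp.coeFn_sub (Φ g) (Φ f)] with x hx hsub
  rw [hsub] at hx
  exact sub_nonneg.1 hx

theorem ae_affine_le_apply (hpos : PreservesNonnegOn Φ) (haff : FixesAffineOn Φ)
    (hK : Convex ℝ K) (p : StrongDual ℝ E × ℝ) {g : contOnSubmodule K}
    (hpg : ∀ x ∈ K, p.1 x + p.2 ≤ (g : E → ℝ) x) : (fun x => p.1 x + p.2) ≤ᵐ[μ] ⇑(Φ g) := by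
  let a : contOnSubmodule K :=
    ⟨fun x => p.1 x + p.2, (p.1.continuous.add continuous_const).continuousOn⟩
  have ha : ⇑(Φ a) =ᵐ[μ] (a : E → ℝ) :=
    haff a ((p.1.toLinearMap.convexOn hK).add_const p.2)
      ((p.1.toLinearMap.concaveOn hK).add_const p.2)
  exact ha.symm.le.trans (ae_le_apply_of_le_on hpos (f := a) hpg)

theorem IsFiniteMaxAffineOn.ae_le_apply (hpos : PreservesNonnegOn Φ) (haff : FixesAffineOn Φ)
    (hK : Convex ℝ K) (hμK : μ Kᶜ = 0) {g : contOnSubmodule K}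
    (hg : IsFiniteMaxAffineOn K (g : E → ℝ)) : (g : E → ℝ) ≤ᵐ[μ] ⇑(Φ g) := by
  obtain ⟨t, hle, hmax⟩ := hg
  have hall : ∀ᵐ x ∂μ, ∀ p ∈ t, p.1 x + p.2 ≤ (Φ g) x :=
    (eventually_all_finset t).2 fun p hp => ae_affine_le_apply hpos haff hK p (hle p hp)
  filter_upwards [hall, mem_ae_iff.2 hμK] with x hx hxK
  obtain ⟨p, hp, hgp⟩ := hmax x hxK
  exact hgp.trans (hx p hp)

end PositiveMap

theorem le_of_forall_pos_le_add_mul {a b C : ℝ} (hC : 0 ≤ C) (h : ∀ ε > 0, a ≤ b + C * ε) :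
    a ≤ b := by
  refine le_of_forall_pos_le_add fun δ hδ => (h (δ / (C + 1)) (by positivity)).trans ?_
  have : C * (δ / (C + 1)) ≤ δ := by
    rw [mul_div_assoc', div_le_iff₀ (by linarith)]
    nlinarith
  linarith

theorem stmt_0_general {E : Type*} [AddCommGroup E] [Module ℝ E] [TopologicalSpace E]
    [IsTopologicalAddGroup E] [ContinuousSMul ℝ E] [LocallyConvexSpace ℝ E] [T2Space E]
    [MeasurableSpace E] [BorelSpace E]
    (K : Set E) (hK : IsCompact K) (hKconv : Convex ℝ K)
    (μ ν : Measure E) [IsFiniteMeasure μ] [IsFiniteMeasure ν]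
    (hμK : μ Kᶜ = 0)
    (Φ : contOnSubmodule K →ₗ[ℝ] Lp ℝ ⊤ μ)
    (hpos : ∀ f : contOnSubmodule K, (∀ x ∈ K, 0 ≤ (f : E → ℝ) x) →
      (fun _ => (0 : ℝ)) ≤ᵐ[μ] ⇑(Φ f))
    (haff : ∀ a : contOnSubmodule K, ConvexOn ℝ K (a : E → ℝ) → ConcaveOn ℝ K (a : E → ℝ) →
      ⇑(Φ a) =ᵐ[μ] (a : E → ℝ))
    (hint : ∀ f : contOnSubmodule K, ∫ x in K, (f : E → ℝ) x ∂ν = ∫ x, (Φ f) x ∂μ) :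
    ∀ f : contOnSubmodule K, ConvexOn ℝ K (f : E → ℝ) →
      ∫ x in K, (f : E → ℝ) x ∂μ ≤ ∫ x in K, (f : E → ℝ) x ∂ν := by
  intro f hf
  refine le_of_forall_pos_le_add_mul (C := μ.real K) measureReal_nonneg fun ε hε => ?_
  obtain ⟨g, hgc, hg_max, hg_approx⟩ := hf.exists_isFiniteMaxAffineOn_approx hK f.2 hε
  let g' : contOnSubmodule K := ⟨g, hgc.continuousOn⟩
  have hΦg : ∫ x in K, g x ∂μ ≤ ∫ x, (Φ g') x ∂μ := by
    have hμ : μ.restrict K = μ := Measure.restrict_eq_self_of_ae_mem (mem_ae_iff.2 hμK)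
    have hgi : IntegrableOn g K μ := hgc.continuousOn.integrableOn_compact hK
    rw [IntegrableOn, hμ] at hgi
    rw [hμ]
    exact integral_mono_ae hgi ((Lp.memLp _).integrable le_top)
      (hg_max.ae_le_apply (g := g') hpos haff hKconv hμK)
  calc ∫ x in K, (f : E → ℝ) x ∂μ ≤ ∫ x in K, (g x + ε) ∂μ :=
        setIntegral_mono_on (f.2.integrableOn_compact hK)
          ((hgc.continuousOn.add continuousOn_const).integrableOn_compact hK) hK.measurableSet
          fun x hx => by linarith [(hg_approx x hx).1]
    _ = ∫ x in K, g x ∂μ + μ.real K * ε := by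
        rw [integral_add (hgc.continuousOn.integrableOn_compact hK) (integrable_const ε),
          setIntegral_const, smul_eq_mul]
    _ ≤ ∫ x, (Φ g') x ∂μ + μ.real K * ε := add_le_add_left hΦg _
    _ = ∫ x in K, g x ∂ν + μ.real K * ε := by rw [hint g']
    _ ≤ ∫ x in K, (f : E → ℝ) x ∂ν + μ.real K * ε := by
        gcongr ?_ + _
        exact setIntegral_mono_on (hgc.continuousOn.integrableOn_compact hK)
          (f.2.integrableOn_compact hK) hK.measurableSet fun x hx => (hg_approx x hx).2

/-- If there is a unital positive linear map `Φ : C(K) → L∞(μ)` fixing the continuous affine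
functions and satisfying `∫ f dν = ∫ Φ(f) dμ`, then `μ ≤ ν` in the Choquet order. -/
theorem stmt_0 {E : Type*} [AddCommGroup E] [Module ℝ E] [TopologicalSpace E]
    [IsTopologicalAddGroup E] [ContinuousSMul ℝ E] [LocallyConvexSpace ℝ E] [T2Space E]
    [MeasurableSpace E] [BorelSpace E]
    (K : Set E) (hK : IsCompact K) (hKconv : Convex ℝ K)
    (μ ν : Measure E) [IsFiniteMeasure μ] [IsFiniteMeasure ν]
    (hμK : μ Kᶜ = 0) (hνK : ν Kᶜ = 0)
    (Φ : contOnSubmodule K →ₗ[ℝ] Lp ℝ ⊤ μ)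
    (hunit : ⇑(Φ ⟨fun _ => 1, continuousOn_const⟩) =ᵐ[μ] fun _ => 1)
    (hpos : ∀ f : contOnSubmodule K, (∀ x ∈ K, 0 ≤ (f : E → ℝ) x) →
      (fun _ => (0 : ℝ)) ≤ᵐ[μ] ⇑(Φ f))
    (haff : ∀ a : contOnSubmodule K, ConvexOn ℝ K (a : E → ℝ) → ConcaveOn ℝ K (a : E → ℝ) →
      ⇑(Φ a) =ᵐ[μ] (a : E → ℝ))
    (hint : ∀ f : contOnSubmodule K, ∫ x in K, (f : E → ℝ) x ∂ν = ∫ x, (Φ f) x ∂μ) :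
    ∀ f : contOnSubmodule K, ConvexOn ℝ K (f : E → ℝ) →
      ∫ x in K, (f : E → ℝ) x ∂μ ≤ ∫ x in K, (f : E → ℝ) x ∂ν :=
  stmt_0_general K hK hKconv μ ν hμK Φ hpos haff hint
end
end

section
/- Korovkin's theorem: Let φₙ : C[a,b] → C[a,b] be a sequence of positive linear maps such that ‖φₙ(g) − g‖∞ → 0 for each g ∈ {1, x, x²}. Then ‖φₙ(f) − f‖∞ → 0 for every f ∈ C[a,b]. -/
/-!
Uniform continuity gives `|f x - f y| ≤ ε + C (x - y)²` for all `x, y`. For fixed `y` the right side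
is a combination of `1`, `x`, `x²`, and positivity of `T` turns the bound into
`|T f y - f y| ≤ T (ε + C (· - y)²) y + |f y| |T 1 y - 1|`. Since `(x - y)²` vanishes at `x = y`,
the right side only involves `ε` and the errors of `T` on `1`, `x`, `x²`, uniformly in `y`.
-/

open Filter Topology

namespace ContinuousMap

theorem abs_apply_le_apply_of_abs_le {X : Type*} [TopologicalSpace X]
    {T : C(X, ℝ) →ₗ[ℝ] C(X, ℝ)}
    (hT : ∀ f : C(X, ℝ), (∀ x, 0 ≤ f x) → ∀ x, 0 ≤ T f x) {g h : C(X, ℝ)}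
    (hgh : ∀ x, |g x| ≤ h x) (y : X) : |T g y| ≤ T h y := by
  have h_add : 0 ≤ T (h + g) y :=
    hT _ (fun x => neg_le_iff_add_nonneg'.1 (neg_le_of_abs_le (hgh x))) y
  have h_sub : 0 ≤ T (h - g) y := hT _ (fun x => sub_nonneg.2 (le_of_abs_le (hgh x))) y
  simp only [map_add, map_sub, add_apply, sub_apply] at h_add h_sub
  exact abs_le.2 ⟨by linarith, by linarith⟩

theorem exists_abs_sub_le_add_mul_dist_sq {X : Type*} [PseudoMetricSpace X] [CompactSpace X]
    (f : C(X, ℝ)) {ε : ℝ} (hε : 0 < ε) :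
    ∃ C, 0 ≤ C ∧ ∀ x y, |f x - f y| ≤ ε + C * dist x y ^ 2 := by
  obtain ⟨δ, hδ, hfδ⟩ := Metric.uniformContinuous_iff.1
    (CompactSpace.uniformContinuous_of_continuous f.continuous) ε hε
  refine ⟨2 * ‖f‖ / δ ^ 2, by positivity, fun x y => ?_⟩
  rcases lt_or_ge (dist x y) δ with hxy | hxy
  · have : |f x - f y| < ε := hfδ hxy
    have : 0 ≤ 2 * ‖f‖ / δ ^ 2 * dist x y ^ 2 := by positivity
    linarith
  · have hfx : |f x| ≤ ‖f‖ := f.norm_coe_le_norm x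
    have hfy : |f y| ≤ ‖f‖ := f.norm_coe_le_norm y
    calc |f x - f y| ≤ |f x| + |f y| := abs_sub _ _
      _ ≤ 2 * ‖f‖ / δ ^ 2 * δ ^ 2 := by field_simp; linarith
      _ ≤ 2 * ‖f‖ / δ ^ 2 * dist x y ^ 2 := by gcongr
      _ ≤ ε + 2 * ‖f‖ / δ ^ 2 * dist x y ^ 2 := le_add_of_nonneg_left hε.le

section Korovkin

variable {X : Type*} [TopologicalSpace X] {p f : C(X, ℝ)}

theorem abs_apply_sub_self_le {T : C(X, ℝ) →ₗ[ℝ] C(X, ℝ)}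
    (hT : ∀ f : C(X, ℝ), (∀ x, 0 ≤ f x) → ∀ x, 0 ≤ T f x) {ε C : ℝ}
    (hf : ∀ x y, |f x - f y| ≤ ε + C * (p x - p y) ^ 2) (y : X) :
    |T f y - f y| ≤ ε * T 1 y + C * ((T (p ^ 2) - p ^ 2) y - 2 * p y * (T p - p) y
      + p y ^ 2 * (T 1 - 1) y) + |f y| * |(T 1 - 1) y| := by
  set g : C(X, ℝ) := f - f y • 1
  set h : C(X, ℝ) := ε • 1 + C • (p ^ 2 - (2 * p y) • p + p y ^ 2 • 1)
  have hgh : ∀ x, |g x| ≤ h x := fun x => by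
    have : h x = ε + C * (p x - p y) ^ 2 := by
      simp only [h, add_apply, sub_apply, smul_apply, pow_apply, one_apply, smul_eq_mul]; ring
    simpa [g, this] using hf x y
  have hTh : T h y = ε * T 1 y + C * ((T (p ^ 2) - p ^ 2) y - 2 * p y * (T p - p) y
      + p y ^ 2 * (T 1 - 1) y) := by
    simp only [h, map_add, map_sub, map_smul, add_apply, sub_apply, smul_apply, pow_apply,
      one_apply, smul_eq_mul]
    ring
  have hTg : T f y - f y = T g y + f y * (T 1 - 1) y := by
    simp only [g, map_sub, map_smul, sub_apply, smul_apply, one_apply, smul_eq_mul]; ring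
  calc |T f y - f y| ≤ |T g y| + |f y * (T 1 - 1) y| := hTg ▸ abs_add_le _ _
    _ ≤ T h y + |f y| * |(T 1 - 1) y| := by
      rw [abs_mul]; gcongr; exact abs_apply_le_apply_of_abs_le hT hgh y
    _ = _ := by rw [hTh]

variable [CompactSpace X]

theorem norm_apply_sub_self_le {T : C(X, ℝ) →ₗ[ℝ] C(X, ℝ)}
    (hT : ∀ f : C(X, ℝ), (∀ x, 0 ≤ f x) → ∀ x, 0 ≤ T f x) {ε C : ℝ} (hε : 0 ≤ ε) (hC : 0 ≤ C)
    (hf : ∀ x y, |f x - f y| ≤ ε + C * (p x - p y) ^ 2) :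
    ‖T f - f‖ ≤ ε * (1 + ‖T 1 - 1‖) + C * (‖T (p ^ 2) - p ^ 2‖ + 2 * ‖p‖ * ‖T p - p‖
      + ‖p‖ ^ 2 * ‖T 1 - 1‖) + ‖f‖ * ‖T 1 - 1‖ := by
  refine (norm_le _ (by positivity)).2 fun y => ?_
  have h1 : |(T 1 - 1) y| ≤ ‖T 1 - 1‖ := (T 1 - 1).norm_coe_le_norm y
  have hp : |(T p - p) y| ≤ ‖T p - p‖ := (T p - p).norm_coe_le_norm y
  have hp2 : |(T (p ^ 2) - p ^ 2) y| ≤ ‖T (p ^ 2) - p ^ 2‖ :=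
    (T (p ^ 2) - p ^ 2).norm_coe_le_norm y
  have hpy : |p y| ≤ ‖p‖ := p.norm_coe_le_norm y
  have hfy : |f y| ≤ ‖f‖ := f.norm_coe_le_norm y
  have hT1 : T 1 y ≤ 1 + ‖T 1 - 1‖ := by
    have := le_of_abs_le h1; simp only [sub_apply, one_apply] at this; linarith
  have herr : (T (p ^ 2) - p ^ 2) y - 2 * p y * (T p - p) y + p y ^ 2 * (T 1 - 1) y
      ≤ ‖T (p ^ 2) - p ^ 2‖ + 2 * ‖p‖ * ‖T p - p‖ + ‖p‖ ^ 2 * ‖T 1 - 1‖ := by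
    have hmid : |2 * p y * (T p - p) y| ≤ 2 * ‖p‖ * ‖T p - p‖ := by
      rw [abs_mul, abs_mul, abs_two]; gcongr
    have hlast : |p y ^ 2 * (T 1 - 1) y| ≤ ‖p‖ ^ 2 * ‖T 1 - 1‖ := by
      rw [abs_mul, abs_pow]; gcongr
    linarith [le_of_abs_le hp2, neg_le_of_abs_le hmid, le_of_abs_le hlast]
  calc ‖(T f - f) y‖ = |T f y - f y| := rfl
    _ ≤ _ := abs_apply_sub_self_le hT hf y
    _ ≤ _ := by gcongr

theorem tendsto_norm_apply_sub_self {φ : ℕ → C(X, ℝ) →ₗ[ℝ] C(X, ℝ)}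
    (hφ : ∀ n (f : C(X, ℝ)), (∀ x, 0 ≤ f x) → ∀ x, 0 ≤ φ n f x)
    (h1 : Tendsto (fun n => ‖φ n 1 - 1‖) atTop (𝓝 0))
    (hp : Tendsto (fun n => ‖φ n p - p‖) atTop (𝓝 0))
    (hp2 : Tendsto (fun n => ‖φ n (p ^ 2) - p ^ 2‖) atTop (𝓝 0))
    (hf : ∀ ε > 0, ∃ C, 0 ≤ C ∧ ∀ x y, |f x - f y| ≤ ε + C * (p x - p y) ^ 2) :
    Tendsto (fun n => ‖φ n f - f‖) atTop (𝓝 0) := by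
  refine tendsto_order.2 ⟨fun c hc => .of_forall fun n => hc.trans_le (norm_nonneg _),
    fun ε hε => ?_⟩
  obtain ⟨C, hC, hfC⟩ := hf (ε / 2) (half_pos hε)
  have hbound : Tendsto (fun n => ε / 2 * (1 + ‖φ n 1 - 1‖) + C * (‖φ n (p ^ 2) - p ^ 2‖
      + 2 * ‖p‖ * ‖φ n p - p‖ + ‖p‖ ^ 2 * ‖φ n 1 - 1‖) + ‖f‖ * ‖φ n 1 - 1‖)
      atTop (𝓝 (ε / 2)) := by
    simpa using (((h1.const_add 1).const_mul (ε / 2)).add (((hp2.add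
      (hp.const_mul _)).add (h1.const_mul _)).const_mul C)).add (h1.const_mul ‖f‖)
  filter_upwards [hbound.eventually_lt_const (half_lt_self hε)] with n hn
  exact (norm_apply_sub_self_le (hφ n) (half_pos hε).le hC hfC).trans_lt hn

end Korovkin

end ContinuousMap

theorem stmt_10_general (a b : ℝ)
    (φ : ℕ → (C(Set.Icc a b, ℝ) →ₗ[ℝ] C(Set.Icc a b, ℝ)))
    (hpos : ∀ n (f : C(Set.Icc a b, ℝ)), (∀ x, 0 ≤ f x) → ∀ x, 0 ≤ (φ n f) x)
    (h1 : Tendsto (fun n => ‖φ n 1 - 1‖) atTop (nhds 0))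
    (hx : Tendsto (fun n => ‖φ n ⟨fun x => (x : ℝ), continuous_subtype_val⟩ -
        ⟨fun x => (x : ℝ), continuous_subtype_val⟩‖) atTop (nhds 0))
    (hx2 : Tendsto (fun n => ‖φ n ⟨fun x => (x : ℝ) ^ 2, continuous_subtype_val.pow 2⟩ -
        ⟨fun x => (x : ℝ) ^ 2, continuous_subtype_val.pow 2⟩‖) atTop (nhds 0)) :
    ∀ f : C(Set.Icc a b, ℝ), Tendsto (fun n => ‖φ n f - f‖) atTop (nhds 0) := by
  intro f
  refine ContinuousMap.tendsto_norm_apply_sub_self (p := (ContinuousMap.id ℝ).restrict _)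
    hpos h1 hx hx2 fun ε hε => ?_
  obtain ⟨C, hC, hfC⟩ := f.exists_abs_sub_le_add_mul_dist_sq hε
  refine ⟨C, hC, fun x y => ?_⟩
  simpa [Subtype.dist_eq, Real.dist_eq, sq_abs] using hfC x y

/-- Korovkin's theorem: if a sequence of positive linear maps on `C[a,b]` converges uniformly
to the identity on `{1, x, x²}`, then it converges uniformly to the identity everywhere. -/
theorem stmt_10 (a b : ℝ) (hab : a ≤ b)
    (φ : ℕ → (C(Set.Icc a b, ℝ) →ₗ[ℝ] C(Set.Icc a b, ℝ)))
    (hpos : ∀ n (f : C(Set.Icc a b, ℝ)), (∀ x, 0 ≤ f x) → ∀ x, 0 ≤ (φ n f) x)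
    (h1 : Tendsto (fun n => ‖φ n 1 - 1‖) atTop (nhds 0))
    (hx : Tendsto (fun n => ‖φ n ⟨fun x => (x : ℝ), continuous_subtype_val⟩ -
        ⟨fun x => (x : ℝ), continuous_subtype_val⟩‖) atTop (nhds 0))
    (hx2 : Tendsto (fun n => ‖φ n ⟨fun x => (x : ℝ) ^ 2, continuous_subtype_val.pow 2⟩ -
        ⟨fun x => (x : ℝ) ^ 2, continuous_subtype_val.pow 2⟩‖) atTop (nhds 0)) :
    ∀ f : C(Set.Icc a b, ℝ), Tendsto (fun n => ‖φ n f - f‖) atTop (nhds 0) :=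
  stmt_10_general a b φ hpos h1 hx hx2
end

section
/- Let I = [a,b] with a ≥ 0, let 1 ≤ s < t be real numbers, and fix c ∈ (a,b]. Define f(x) = (t − s) − t (x/c)^s + s (x/c)^t on I. Then f(c) = 0, f(x) ≥ 0 for all x ∈ I, and f(x) > 0 for x ≠ c. Moreover f lies in the span of {1, x^s, x^t}. -/
/-!
Weighted AM–GM for `1` and `y ^ t` with weights `1 - s/t` and `s/t` gives
`y ^ s ≤ (1 - s/t) + (s/t) y ^ t`, with equality only at `y = 1`; multiplying by `t` this is
`f ≥ 0` with equality only at `x = c`. Since `c > 0`, `(x/c) ^ p = x ^ p / c ^ p` for every real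
`x`, so `f` is a linear combination of `1`, `x ^ s`, `x ^ t`.
-/

open Real

/-- Unlike `Real.div_rpow`, this holds for negative `x` too: both sides then carry the same
factor `cos (p * π)`. -/
lemma div_rpow_of_pos (x : ℝ) {c : ℝ} (hc : 0 < c) (p : ℝ) :
    (x / c) ^ p = x ^ p / c ^ p := by
  rcases lt_or_ge x 0 with hx | hx
  · rw [rpow_def_of_neg (div_neg_of_neg_of_pos hx hc), rpow_def_of_neg hx, rpow_def_of_pos hc,
      log_div hx.ne hc.ne', sub_mul, exp_sub]
    ring
  · exact div_rpow hx hc.le p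

lemma mul_rpow_lt_sub_add_mul_rpow {y s t : ℝ} (hy : 0 ≤ y) (hy1 : y ≠ 1) (hs : 0 < s)
    (hst : s < t) : t * y ^ s < t - s + s * y ^ t := by
  have ht : 0 < t := hs.trans hst
  have hyt : (1 : ℝ) ≠ y ^ t := by
    rw [← one_rpow t, ne_eq, rpow_left_inj zero_le_one hy ht.ne']
    exact hy1.symm
  have amgm := (geom_mean_lt_arith_mean2_weighted_iff_of_pos (sub_pos.2 ((div_lt_one ht).2 hst))
    (div_pos hs ht) zero_le_one (rpow_nonneg hy t) (sub_add_cancel 1 (s / t))).2 hyt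
  rw [one_rpow, one_mul, ← rpow_mul hy, mul_div_cancel₀ s ht.ne'] at amgm
  calc t * y ^ s < t * ((1 - s / t) * 1 + s / t * y ^ t) := mul_lt_mul_of_pos_left amgm ht
    _ = t - s + s * y ^ t := by field_simp

lemma mul_rpow_le_sub_add_mul_rpow {y s t : ℝ} (hy : 0 ≤ y) (hs : 0 < s) (hst : s < t) :
    t * y ^ s ≤ t - s + s * y ^ t := by
  rcases eq_or_ne y 1 with rfl | hy1
  · simp
  · exact (mul_rpow_lt_sub_add_mul_rpow hy hy1 hs hst).le

/-- For `0 ≤ a`, `1 ≤ s < t` and `c ∈ (a,b]`, the function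
`f(x) = (t−s) − t(x/c)^s + s(x/c)^t` vanishes at `c`, is nonnegative on `[a,b]`, is strictly
positive off `c`, and lies in the span of `{1, x^s, x^t}`. -/
theorem stmt_12 (a b s t c : ℝ) (ha : 0 ≤ a) (hs : 1 ≤ s) (hst : s < t)
    (hc : c ∈ Set.Ioc a b) :
    ((t - s) - t * (c / c) ^ s + s * (c / c) ^ t = 0) ∧
    (∀ x ∈ Set.Icc a b, 0 ≤ (t - s) - t * (x / c) ^ s + s * (x / c) ^ t) ∧
    (∀ x ∈ Set.Icc a b, x ≠ c → 0 < (t - s) - t * (x / c) ^ s + s * (x / c) ^ t) ∧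
    (fun x : ℝ => (t - s) - t * (x / c) ^ s + s * (x / c) ^ t) ∈
      Submodule.span ℝ {(fun _ : ℝ => (1 : ℝ)), (fun x : ℝ => x ^ s),
        (fun x : ℝ => x ^ t)} := by
  have hc0 : 0 < c := ha.trans_lt hc.1
  have hs0 : 0 < s := one_pos.trans_le hs
  have hxc {x : ℝ} (hx : x ∈ Set.Icc a b) : 0 ≤ x / c := div_nonneg (ha.trans hx.1) hc0.le
  refine ⟨by simp [hc0.ne'], fun x hx => ?_, fun x hx hne => ?_, ?_⟩
  · linarith [mul_rpow_le_sub_add_mul_rpow (hxc hx) hs0 hst]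
  · have hx1 : x / c ≠ 1 := fun h => hne ((div_eq_one_iff_eq hc0.ne').1 h)
    linarith [mul_rpow_lt_sub_add_mul_rpow (hxc hx) hx1 hs0 hst]
  · have hcomb : (fun x : ℝ => (t - s) - t * (x / c) ^ s + s * (x / c) ^ t) =
        (t - s) • (fun _ : ℝ => (1 : ℝ)) - (t / c ^ s) • (fun x : ℝ => x ^ s)
          + (s / c ^ t) • (fun x : ℝ => x ^ t) := by
      funext x
      simp only [Pi.add_apply, Pi.sub_apply, Pi.smul_apply, smul_eq_mul, mul_one,
        div_rpow_of_pos x hc0]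
      ring
    rw [hcomb]
    refine Submodule.add_mem _ (Submodule.sub_mem _ ?_ ?_) ?_ <;>
      exact Submodule.smul_mem _ _ (Submodule.subset_span (by simp))
end

section
/- Let X be a compact Hausdorff space and let A ⊂ C(X,ℝ) be a unital linear subspace with the property that for every pair of distinct points x, y ∈ X there is a nonnegative g ∈ A with g(x) = 0 < g(y). Then for each x ∈ X, the point mass δ_x is the unique regular Borel probability measure μ on X satisfying ∫ a dμ = a(x) for all a ∈ A. -/
/-!
If `μ` represents `x` and `K` is a compact set missing `x`, the separating functions `g_y`,
`y ∈ K`, cover `K` by the open sets `{g_y > 0}`; summing finitely many of them gives a nonnegative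
`G ∈ A` with `G x = 0` and `G > 0` on `K`. Then `∫ G dμ = G x = 0` forces `μ K = 0`, and inner
regularity of `μ` on the open set `{x}ᶜ` gives `μ {x}ᶜ = 0`, i.e. `μ = δ_x`.
-/

open MeasureTheory Topology

section Positivity

variable {X : Type*} [TopologicalSpace X]

theorem exists_nonneg_eq_zero_pos_on_isCompact {A : AddSubmonoid C(X, ℝ)} {x : X} {K : Set X}
    (hK : IsCompact K) (h : ∀ y ∈ K, ∃ g ∈ A, (∀ z, 0 ≤ g z) ∧ g x = 0 ∧ 0 < g y) :
    ∃ G ∈ A, (∀ z, 0 ≤ G z) ∧ G x = 0 ∧ ∀ z ∈ K, 0 < G z := by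
  refine hK.induction_on (p := fun s ↦ ∃ G ∈ A, (∀ z, 0 ≤ G z) ∧ G x = 0 ∧ ∀ z ∈ s, 0 < G z)
    ⟨0, A.zero_mem, fun _ ↦ le_rfl, rfl, fun _ ↦ False.elim⟩ ?_ ?_ ?_
  · rintro s t hst ⟨G, hGA, hG0, hGx, hGt⟩
    exact ⟨G, hGA, hG0, hGx, fun z hz ↦ hGt z (hst hz)⟩
  · rintro s t ⟨G, hGA, hG0, hGx, hGs⟩ ⟨H, hHA, hH0, hHx, hHt⟩
    refine ⟨G + H, A.add_mem hGA hHA, fun z ↦ add_nonneg (hG0 z) (hH0 z), by simp [hGx, hHx], ?_⟩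
    rintro z (hz | hz)
    · exact add_pos_of_pos_of_nonneg (hGs z hz) (hH0 z)
    · exact add_pos_of_nonneg_of_pos (hG0 z) (hHt z hz)
  · intro y hy
    obtain ⟨g, hgA, hg0, hgx, hgy⟩ := h y hy
    have hnhds : {z | 0 < g z} ∈ 𝓝 y := (isOpen_lt continuous_const g.continuous).mem_nhds hgy
    exact ⟨_, mem_nhdsWithin_of_mem_nhds hnhds, g, hgA, hg0, hgx, fun _ hz ↦ hz⟩

end Positivity

section Measure

variable {X : Type*} [TopologicalSpace X] [MeasurableSpace X]

theorem ContinuousMap.measure_support_eq_zero_of_integral_eq_zero [OpensMeasurableSpace X]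
    [CompactSpace X] {μ : Measure X} [IsFiniteMeasure μ] {G : C(X, ℝ)} (hG : ∀ z, 0 ≤ G z)
    (hint : ∫ z, G z ∂μ = 0) : μ (Function.support G) = 0 := by
  have hGi : Integrable G μ := G.continuous.integrable_of_hasCompactSupport (.of_compactSpace G)
  exact μ.measure_support_eq_zero_iff.mpr ((integral_eq_zero_iff_of_nonneg hG hGi).mp hint)

theorem IsOpen.measure_eq_zero_of_forall_isCompact {μ : Measure X} [μ.Regular] {U : Set X}
    (hU : IsOpen U) (h : ∀ K ⊆ U, IsCompact K → μ K = 0) : μ U = 0 := by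
  simpa only [hU.measure_eq_iSup_isCompact μ, ENNReal.iSup_eq_zero] using h

end Measure

theorem MeasureTheory.Measure.eq_dirac_of_measure_compl_singleton_eq_zero {α : Type*}
    [MeasurableSpace α] [MeasurableSingletonClass α] {μ : Measure α} [IsProbabilityMeasure μ]
    {x : α} (h : μ {x}ᶜ = 0) : μ = Measure.dirac x := by
  have hx : μ {x} = 1 := (prob_compl_eq_zero_iff (measurableSet_singleton x)).mp h
  calc μ = μ.restrict {x} := (Measure.restrict_eq_self_of_ae_mem (ae_iff.mpr h)).symm
    _ = Measure.dirac x := by rw [Measure.restrict_singleton, hx, one_smul]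

theorem stmt_13_general {X : Type*} [TopologicalSpace X] [CompactSpace X] [T2Space X]
    [MeasurableSpace X] [BorelSpace X]
    (A : Submodule ℝ C(X, ℝ))
    (hsep : ∀ x y : X, x ≠ y → ∃ g ∈ A, (∀ z, 0 ≤ g z) ∧ g x = 0 ∧ 0 < g y)
    (x : X) :
    (∀ a ∈ A, ∫ z, a z ∂(Measure.dirac x) = a x) ∧
    ∀ μ : Measure X, μ.Regular → IsProbabilityMeasure μ →
      (∀ a ∈ A, ∫ z, a z ∂μ = a x) → μ = Measure.dirac x := by
  refine ⟨fun a _ ↦ integral_dirac _ x, fun μ hreg _ hrep ↦ ?_⟩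
  have hcompact_null : ∀ K ⊆ {x}ᶜ, IsCompact K → μ K = 0 := fun K hKx hK ↦ by
    obtain ⟨G, hGA, hG0, hGx, hGK⟩ := exists_nonneg_eq_zero_pos_on_isCompact
      (A := A.toAddSubmonoid) hK fun y hy ↦ hsep x y (Ne.symm (hKx hy))
    have hsupp := G.measure_support_eq_zero_of_integral_eq_zero hG0 (by rw [hrep G hGA, hGx])
    exact measure_mono_null (fun z hz ↦ (hGK z hz).ne') hsupp
  exact Measure.eq_dirac_of_measure_compl_singleton_eq_zero
    (isOpen_compl_singleton.measure_eq_zero_of_forall_isCompact hcompact_null)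

/-- If a unital subspace `A ⊆ C(X,ℝ)` separates points via nonnegative functions vanishing at
one point, then every point of `X` has `δ_x` as its unique representing probability measure. -/
theorem stmt_13 {X : Type*} [TopologicalSpace X] [CompactSpace X] [T2Space X]
    [MeasurableSpace X] [BorelSpace X]
    (A : Submodule ℝ C(X, ℝ)) (h1 : (1 : C(X, ℝ)) ∈ A)
    (hsep : ∀ x y : X, x ≠ y → ∃ g ∈ A, (∀ z, 0 ≤ g z) ∧ g x = 0 ∧ 0 < g y)
    (x : X) :
    (∀ a ∈ A, ∫ z, a z ∂(Measure.dirac x) = a x) ∧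
    ∀ μ : Measure X, μ.Regular → IsProbabilityMeasure μ →
      (∀ a ∈ A, ∫ z, a z ∂μ = a x) → μ = Measure.dirac x :=
  stmt_13_general A hsep x
end
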